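/- Let G be a finite group and H ⊆ G a subgroup such that the action of G on G/H by left translation is doubly transitive and such that for all distinct ω, ω' ∈ G/H every automorphism of the twofold stabiliser G_ω ∩ G_{ω'} is inner. Then any two subgroups U₁, U₂ ⊆ H that are conjugate in G are conjugate already in H. -/

import Mathlib

/-!
Let `g U₁ g⁻¹ = U₂` with `g ∉ H`, and put `ω₀ = H`. Then `U₂` fixes both `ω₀` and `g ω₀`, so it
lies in their twofold stabiliser `D`. By double transitivity some `t` swaps `ω₀` and `g ω₀`; it
normalises `D`, and since conjugation by `t` is an inner automorphism of `D`, say by `c ∈ D`, the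
element `c⁻¹ t` centralises `D ⊇ U₂` and still maps `g ω₀` to `ω₀`. Hence `c⁻¹ t g ∈ H`, and it
conjugates `U₁` onto `c⁻¹ t U₂ t⁻¹ c = U₂`.
-/

open MulAction

namespace Subgroup

variable {G : Type*} [Group G]

theorem map_conj_mul (a b : G) (U : Subgroup G) :
    U.map (MulAut.conj (a * b)).toMonoidHom =
      (U.map (MulAut.conj b).toMonoidHom).map (MulAut.conj a).toMonoidHom := by
  rw [map_map, map_mul]
  rfl

theorem map_conj_eq_self_of_mem_centralizer {U : Subgroup G} {t : G} (ht : t ∈ centralizer U) :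
    U.map (MulAut.conj t).toMonoidHom = U := by
  have hfix : ∀ u ∈ U, MulAut.conj t u = u := fun u hu => by
    rw [MulAut.conj_apply, ← ht u hu, mul_inv_cancel_right]
  ext x
  constructor
  · rintro ⟨u, hu, rfl⟩
    simpa [hfix u hu] using hu
  · exact fun hx => ⟨x, hx, hfix x hx⟩

/-- When every automorphism of `D` is inner, `N_G(D) = D · C_G(D)`. -/
theorem exists_mem_inv_mul_mem_centralizer_of_mem_normalizer {D : Subgroup G}
    (hinner : ∀ f : D ≃* D, ∃ c : D, ∀ x, f x = c * x * c⁻¹) {t : G}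
    (ht : t ∈ normalizer (D : Set G)) :
    ∃ c ∈ D, c⁻¹ * t ∈ centralizer D := by
  obtain ⟨c, hc⟩ := hinner (D.normalizerMonoidHom ⟨t, ht⟩)
  refine ⟨c, c.2, fun x hx => ?_⟩
  have := congrArg Subtype.val (hc ⟨x, hx⟩)
  simp only [normalizerMonoidHom_apply_apply_coe, coe_mul, InvMemClass.coe_inv] at this
  calc x * ((c : G)⁻¹ * t) = (c : G)⁻¹ * (c * x * (c : G)⁻¹) * t := by group
    _ = (c : G)⁻¹ * (t * x * t⁻¹) * t := by rw [this]
    _ = (c : G)⁻¹ * t * x := by group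

end Subgroup

namespace MulAction

variable {G α : Type*} [Group G] [MulAction G α]

theorem mem_normalizer_stabilizer_inf_of_swap {a b : α} {t : G} (ha : t • a = b) (hb : t • b = a) :
    t ∈ Subgroup.normalizer ((stabilizer G a ⊓ stabilizer G b : Subgroup G) : Set G) := by
  rw [Subgroup.mem_normalizer_iff_map_conj_eq, Subgroup.map_inf _ _ _ (MulAut.conj t).injective,
    ← MulEquiv.toMonoidHom_eq_coe, ← stabilizer_smul_eq_stabilizer_map_conj,
    ← stabilizer_smul_eq_stabilizer_map_conj, ha, hb, inf_comm]

end MulAction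

theorem stmt1_general {G : Type*} [Group G] (H : Subgroup G)
    (h2trans : ∀ ω ω' τ τ' : G ⧸ H, ω ≠ ω' → τ ≠ τ' →
      ∃ g : G, g • ω = τ ∧ g • ω' = τ')
    (hinner : ∀ ω ω' : G ⧸ H, ω ≠ ω' →
      ∀ f : (MulAction.stabilizer G ω ⊓ MulAction.stabilizer G ω' : Subgroup G) ≃*
            (MulAction.stabilizer G ω ⊓ MulAction.stabilizer G ω' : Subgroup G),
        ∃ c : (MulAction.stabilizer G ω ⊓ MulAction.stabilizer G ω' : Subgroup G),
          ∀ x, f x = c * x * c⁻¹)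
    (U₁ U₂ : Subgroup G) (hU₁ : U₁ ≤ H) (hU₂ : U₂ ≤ H)
    (hconj : ∃ g : G, Subgroup.map (MulAut.conj g).toMonoidHom U₁ = U₂) :
    ∃ h ∈ H, Subgroup.map (MulAut.conj h).toMonoidHom U₁ = U₂ := by
  obtain ⟨g, rfl⟩ := hconj
  by_cases hg : g ∈ H
  · exact ⟨g, hg, rfl⟩
  set ω₀ : G ⧸ H := ((1 : G) : G ⧸ H)
  have hstab₀ : stabilizer G ω₀ = H := stabilizer_quotient H
  have hne : ω₀ ≠ g • ω₀ := fun h => hg (by simpa [hstab₀] using (mem_stabilizer_iff.mpr h.symm))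
  obtain ⟨t, ht₀, ht₁⟩ := h2trans ω₀ (g • ω₀) (g • ω₀) ω₀ hne hne.symm
  obtain ⟨c, hcD, hcent⟩ := Subgroup.exists_mem_inv_mul_mem_centralizer_of_mem_normalizer
    (hinner ω₀ (g • ω₀) hne) (mem_normalizer_stabilizer_inf_of_swap ht₀ ht₁)
  have hUD : U₁.map (MulAut.conj g).toMonoidHom ≤ stabilizer G ω₀ ⊓ stabilizer G (g • ω₀) := by
    rw [stabilizer_smul_eq_stabilizer_map_conj, hstab₀]
    exact le_inf hU₂ (Subgroup.map_mono hU₁)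
  refine ⟨c⁻¹ * t * g, ?_, ?_⟩
  · rw [← hstab₀, mem_stabilizer_iff, mul_smul, mul_smul, ht₁, inv_smul_eq_iff, hcD.1]
  · rw [Subgroup.map_conj_mul, Subgroup.map_conj_eq_self_of_mem_centralizer
      (Subgroup.centralizer_le hUD hcent)]

/-- G finite, H ≤ G with the action on G/H doubly transitive, and for all
distinct ω, ω' every automorphism of G_ω ∩ G_{ω'} is inner. Then subgroups U₁, U₂ ⊆ H
conjugate in G are conjugate already in H. -/
theorem stmt1 {G : Type*} [Group G] [Finite G] (H : Subgroup G)
    (h2trans : ∀ ω ω' τ τ' : G ⧸ H, ω ≠ ω' → τ ≠ τ' →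
      ∃ g : G, g • ω = τ ∧ g • ω' = τ')
    (hinner : ∀ ω ω' : G ⧸ H, ω ≠ ω' →
      ∀ f : (MulAction.stabilizer G ω ⊓ MulAction.stabilizer G ω' : Subgroup G) ≃*
            (MulAction.stabilizer G ω ⊓ MulAction.stabilizer G ω' : Subgroup G),
        ∃ c : (MulAction.stabilizer G ω ⊓ MulAction.stabilizer G ω' : Subgroup G),
          ∀ x, f x = c * x * c⁻¹)
    (U₁ U₂ : Subgroup G) (hU₁ : U₁ ≤ H) (hU₂ : U₂ ≤ H)
    (hconj : ∃ g : G, Subgroup.map (MulAut.conj g).toMonoidHom U₁ = U₂) :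
    ∃ h ∈ H, Subgroup.map (MulAut.conj h).toMonoidHom U₁ = U₂ :=
  stmt1_general H h2trans hinner U₁ U₂ hU₁ hU₂ hconj
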